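/- Let V and W be Euclidean Jordan algebras whose order unit spaces carry sequential products, and suppose the vector space tensor product V ⊗ W is also a sequential product space with (a₁⊗b₁) & (a₂⊗b₂) = (a₁&a₂) ⊗ (b₁&b₂). Then for atomic effects p in V and q in W, the effect p ⊗ q is atomic in V ⊗ W. -/
import Mathlib


open scoped BigOperators

/-- A sequential product space: an order unit space `(V, ≤, unit)` with a binary
operation `seq` on its effects satisfying axioms (S1)-(S7). -/
structure SPS (V : Type*) [NormedAddCommGroup V] [NormedSpace ℝ V] [PartialOrder V] where
  unit : V
  seq : V → V → V
  /-- The effects: elements `a` with `0 ≤ a ≤ unit`. -/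
  Eff : V → Prop
  eff_iff : ∀ a : V, Eff a ↔ 0 ≤ a ∧ a ≤ unit
  eff_unit : Eff unit
  /-- `V` is an ordered vector space. -/
  add_le_add_right' : ∀ a b c : V, a ≤ b → a + c ≤ b + c
  smul_le_smul' : ∀ (r : ℝ) (a b : V), 0 ≤ r → a ≤ b → r • a ≤ r • b
  /-- `unit` is a strong unit. -/
  strong : ∀ a : V, ∃ n : ℕ, -((n : ℝ) • unit) ≤ a ∧ a ≤ (n : ℝ) • unit
  /-- Archimedean property. -/
  arch : ∀ a : V, (∀ n : ℕ, a ≤ ((n : ℝ) + 1)⁻¹ • unit) → a ≤ 0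
  /-- The norm of `V` is the order-unit norm. -/
  norm_def : ∀ a : V, ‖a‖ = sInf {r : ℝ | 0 ≤ r ∧ -(r • unit) ≤ a ∧ a ≤ r • unit}
  seq_eff : ∀ a b : V, Eff a → Eff b → Eff (seq a b)
  /-- (S1) additivity in the second argument. -/
  s1 : ∀ a b c : V, Eff a → Eff b → Eff c → Eff (b + c) →
      seq a (b + c) = seq a b + seq a c
  /-- (S2) norm-continuity in the first argument. -/
  s2 : ∀ b : V, Eff b → ContinuousOn (fun a => seq a b) {a : V | Eff a}
  /-- (S3) unitality. -/
  s3 : ∀ a : V, Eff a → seq unit a = a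
  /-- (S4) orthogonal effects are compatible. -/
  s4 : ∀ a b : V, Eff a → Eff b → seq a b = 0 → seq b a = 0
  /-- (S5) associativity for compatible effects. -/
  s5 : ∀ a b c : V, Eff a → Eff b → Eff c → seq a b = seq b a →
      seq a (seq b c) = seq (seq a b) c
  /-- (S6) compatibility is preserved by complements. -/
  s6a : ∀ a b : V, Eff a → Eff b → seq a b = seq b a →
      seq a (unit - b) = seq (unit - b) a
  /-- (S6) compatibility is preserved by sums. -/
  s6b : ∀ a b c : V, Eff a → Eff b → Eff c → Eff (b + c) →
      seq a b = seq b a → seq a c = seq c a → seq a (b + c) = seq (b + c) a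
  /-- (S7) compatibility is preserved by the product. -/
  s7 : ∀ a b c : V, Eff a → Eff b → Eff c →
      seq a b = seq b a → seq a c = seq c a → seq a (seq b c) = seq (seq b c) a

namespace SPS

variable {V : Type*} [NormedAddCommGroup V] [NormedSpace ℝ V] [PartialOrder V]

/-- `a` and `b` are compatible: `a & b = b & a`. -/
def Compat (S : SPS V) (a b : V) : Prop := S.seq a b = S.seq b a

/-- An effect `p` is sharp when the only effect below both `p` and `unit - p` is `0`. -/
def Sharp (S : SPS V) (p : V) : Prop :=
  S.Eff p ∧ ∀ b : V, S.Eff b → b ≤ p → b ≤ S.unit - p → b = 0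

/-- An effect `p` is sharp (idempotence formulation): `p & p = p`. -/
def SharpI (S : SPS V) (p : V) : Prop := S.Eff p ∧ S.seq p p = p

/-- An effect `p` is atomic when `p ≠ 0` and every effect below `p` is a multiple of `p`. -/
def Atomic (S : SPS V) (p : V) : Prop :=
  S.Eff p ∧ p ≠ 0 ∧ ∀ a : V, S.Eff a → a ≤ p → ∃ t : ℝ, 0 ≤ t ∧ t ≤ 1 ∧ a = t • p

/-- `c` is the least sharp effect above `a` (the ceiling `⌈a⌉`). -/
def IsCeil (S : SPS V) (a c : V) : Prop :=
  S.SharpI c ∧ a ≤ c ∧ ∀ d : V, S.SharpI d → a ≤ d → c ≤ d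

/-- `f` is the greatest sharp effect below `a` (the floor `⌊a⌋`). -/
def IsFloor (S : SPS V) (a f : V) : Prop :=
  S.SharpI f ∧ f ≤ a ∧ ∀ d : V, S.SharpI d → d ≤ a → d ≤ f

end SPS


section Aux

namespace SPS

variable {X : Type*} [NormedAddCommGroup X] [NormedSpace ℝ X] [PartialOrder X]

lemma sub_nonneg_iff (S : SPS X) {a b : X} : 0 ≤ b - a ↔ a ≤ b := by
  constructor
  · intro h
    have := S.add_le_add_right' 0 (b - a) a h
    simpa using this
  · intro h
    have := S.add_le_add_right' a b (-a) h
    simpa [sub_eq_add_neg] using this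

lemma add_le_add'' (S : SPS X) {a b c d : X} (h1 : a ≤ b) (h2 : c ≤ d) :
    a + c ≤ b + d := by
  have h3 := S.add_le_add_right' a b c h1
  have h4 := S.add_le_add_right' c d b h2
  rw [add_comm c b, add_comm d b] at h4
  exact le_trans h3 h4

lemma smul_nonneg' (S : SPS X) {r : ℝ} {a : X} (hr : 0 ≤ r) (ha : 0 ≤ a) :
    0 ≤ r • a := by
  have := S.smul_le_smul' r 0 a hr ha
  simpa using this

lemma smul_le_smul_scalar (S : SPS X) {r s : ℝ} {a : X} (h : r ≤ s) (ha : 0 ≤ a) :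
    r • a ≤ s • a := by
  rw [← S.sub_nonneg_iff, ← sub_smul]
  exact S.smul_nonneg' (by linarith) ha

lemma unit_nonneg (S : SPS X) : 0 ≤ S.unit := ((S.eff_iff _).1 S.eff_unit).1

lemma eff_nonneg (S : SPS X) {a : X} (h : S.Eff a) : 0 ≤ a := ((S.eff_iff _).1 h).1

lemma eff_le_unit (S : SPS X) {a : X} (h : S.Eff a) : a ≤ S.unit := ((S.eff_iff _).1 h).2

lemma eff_of (S : SPS X) {a : X} (h0 : 0 ≤ a) (h1 : a ≤ S.unit) : S.Eff a :=
  (S.eff_iff a).2 ⟨h0, h1⟩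

lemma eff_zero (S : SPS X) : S.Eff 0 := S.eff_of le_rfl S.unit_nonneg

lemma eff_smul (S : SPS X) {t : ℝ} {a : X} (h0 : 0 ≤ t) (h1 : t ≤ 1) (ha : S.Eff a) :
    S.Eff (t • a) := by
  refine S.eff_of (S.smul_nonneg' h0 (S.eff_nonneg ha)) ?_
  calc t • a ≤ t • S.unit := S.smul_le_smul' t a S.unit h0 (S.eff_le_unit ha)
    _ ≤ 1 • S.unit := S.smul_le_smul_scalar h1 S.unit_nonneg
    _ = S.unit := one_smul _ _

lemma eff_sub (S : SPS X) {a b : X} (ha : S.Eff a) (hb : S.Eff b) (h : b ≤ a) :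
    S.Eff (a - b) := by
  refine S.eff_of (S.sub_nonneg_iff.2 h) ?_
  rw [← S.sub_nonneg_iff]
  have : S.unit - (a - b) = (S.unit - a) + b := by abel
  rw [this]
  have h1 : (0:X) ≤ S.unit - a := S.sub_nonneg_iff.2 (S.eff_le_unit ha)
  have h2 : (0:X) ≤ b := S.eff_nonneg hb
  simpa using S.add_le_add'' h1 h2

lemma eff_sub_unit (S : SPS X) {a : X} (ha : S.Eff a) : S.Eff (S.unit - a) :=
  S.eff_sub S.eff_unit ha (S.eff_le_unit ha)

lemma eff_add (S : SPS X) {a b : X} (ha : 0 ≤ a) (hb : 0 ≤ b) (h : a + b ≤ S.unit) :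
    S.Eff (a + b) := S.eff_of (by simpa using S.add_le_add'' ha hb) h

lemma seq_zero_right (S : SPS X) {a : X} (ha : S.Eff a) : S.seq a 0 = 0 := by
  have := S.s1 a 0 0 ha S.eff_zero S.eff_zero (by simpa using S.eff_zero)
  simp only [add_zero] at this
  have h2 : S.seq a 0 - S.seq a 0 = S.seq a 0 := by
    nth_rewrite 1 [this]; abel
  simpa using h2.symm

lemma seq_zero_left (S : SPS X) {a : X} (ha : S.Eff a) : S.seq 0 a = 0 :=
  S.s4 a 0 ha S.eff_zero (S.seq_zero_right ha)

lemma seq_unit_right (S : SPS X) {a : X} (ha : S.Eff a) : S.seq a S.unit = a := by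
  have hc : S.seq a 0 = S.seq 0 a := by
    rw [S.seq_zero_right ha, S.seq_zero_left ha]
  have := S.s6a a 0 ha S.eff_zero hc
  rw [sub_zero] at this
  rw [this, S.s3 a ha]

lemma seq_mono_right (S : SPS X) {a b c : X} (ha : S.Eff a) (hb : S.Eff b) (hc : S.Eff c)
    (h : b ≤ c) : S.seq a b ≤ S.seq a c := by
  have hcb : S.Eff (c - b) := S.eff_sub hc hb h
  have := S.s1 a b (c - b) ha hb hcb (by simpa using hc)
  rw [add_sub_cancel] at this
  rw [this]
  have h0 : (0:X) ≤ S.seq a (c - b) := S.eff_nonneg (S.seq_eff a (c-b) ha hcb)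
  have := S.add_le_add'' (le_refl (S.seq a b)) h0
  simpa using this

lemma seq_le_left (S : SPS X) {a b : X} (ha : S.Eff a) (hb : S.Eff b) :
    S.seq a b ≤ a := by
  have := S.seq_mono_right ha hb S.eff_unit (S.eff_le_unit hb)
  rwa [S.seq_unit_right ha] at this

end SPS

end Aux
section Aux2

namespace SPS

variable {X : Type*} [NormedAddCommGroup X] [NormedSpace ℝ X] [PartialOrder X]

lemma normSetNonempty (S : SPS X) (a : X) :
    {r : ℝ | 0 ≤ r ∧ -(r • S.unit) ≤ a ∧ a ≤ r • S.unit}.Nonempty := by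
  obtain ⟨n, h1, h2⟩ := S.strong a
  exact ⟨n, by positivity, h1, h2⟩

lemma normSetBdd (S : SPS X) (a : X) :
    BddBelow {r : ℝ | 0 ≤ r ∧ -(r • S.unit) ≤ a ∧ a ≤ r • S.unit} :=
  ⟨0, fun _ hx => hx.1⟩

lemma norm_le_of (S : SPS X) {a : X} {r : ℝ} (h0 : 0 ≤ r) (h1 : -(r • S.unit) ≤ a)
    (h2 : a ≤ r • S.unit) : ‖a‖ ≤ r := by
  rw [S.norm_def]
  exact csInf_le (S.normSetBdd a) ⟨h0, h1, h2⟩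

lemma le_norm_smul_unit (S : SPS X) (a : X) : a ≤ ‖a‖ • S.unit := by
  have key : a - ‖a‖ • S.unit ≤ 0 := by
    apply S.arch
    intro n
    have hlt : sInf {r : ℝ | 0 ≤ r ∧ -(r • S.unit) ≤ a ∧ a ≤ r • S.unit}
        < ‖a‖ + ((n:ℝ) + 1)⁻¹ := by
      rw [← S.norm_def]
      have : (0:ℝ) < ((n:ℝ) + 1)⁻¹ := by positivity
      linarith
    obtain ⟨r, hr, hrlt⟩ := exists_lt_of_csInf_lt (S.normSetNonempty a) hlt
    have h1 : a ≤ r • S.unit := hr.2.2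
    have h2 : r • S.unit ≤ (‖a‖ + ((n:ℝ) + 1)⁻¹) • S.unit :=
      S.smul_le_smul_scalar (le_of_lt hrlt) S.unit_nonneg
    have h3 : a ≤ ‖a‖ • S.unit + ((n:ℝ) + 1)⁻¹ • S.unit := by
      rw [← add_smul]; exact le_trans h1 h2
    have := S.add_le_add_right' a (‖a‖ • S.unit + ((n:ℝ) + 1)⁻¹ • S.unit)
      (-(‖a‖ • S.unit)) h3
    calc a - ‖a‖ • S.unit = a + -(‖a‖ • S.unit) := by abel
      _ ≤ ‖a‖ • S.unit + ((n:ℝ)+1)⁻¹ • S.unit + -(‖a‖ • S.unit) := this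
      _ = ((n:ℝ)+1)⁻¹ • S.unit := by abel
  have := S.add_le_add_right' (a - ‖a‖ • S.unit) 0 (‖a‖ • S.unit) key
  simpa using this

lemma norm_le_one (S : SPS X) {a : X} (ha : S.Eff a) : ‖a‖ ≤ 1 := by
  refine S.norm_le_of zero_le_one ?_ (by simpa using S.eff_le_unit ha)
  have h : -((1:ℝ) • S.unit) ≤ 0 := by
    rw [one_smul]
    have := S.add_le_add_right' 0 S.unit (-S.unit) S.unit_nonneg
    simpa using this
  exact le_trans h (S.eff_nonneg ha)

lemma exists_rep (S : SPS X) (x : X) :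
    ∃ ry : ℝ × X, 0 < ry.1 ∧ S.Eff ry.2 ∧ x = (2 * ry.1) • ry.2 - ry.1 • S.unit := by
  obtain ⟨n, h1, h2⟩ := S.strong x
  set r : ℝ := (n:ℝ) + 1 with hr
  have hrpos : 0 < r := by positivity
  have hnr : (n:ℝ) • S.unit ≤ r • S.unit :=
    S.smul_le_smul_scalar (by simp [hr]) S.unit_nonneg
  have hb1 : -(r • S.unit) ≤ x := by
    refine le_trans ?_ h1
    have := S.add_le_add_right' ((n:ℝ) • S.unit) (r • S.unit)
      (-((n:ℝ) • S.unit) + -(r • S.unit)) hnr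
    calc -(r • S.unit) = (n:ℝ) • S.unit + (-((n:ℝ) • S.unit) + -(r • S.unit)) := by abel
      _ ≤ r • S.unit + (-((n:ℝ) • S.unit) + -(r • S.unit)) := this
      _ = -((n:ℝ) • S.unit) := by abel
  have hb2 : x ≤ r • S.unit := le_trans h2 hnr
  refine ⟨((r : ℝ), (2 * r)⁻¹ • (x + r • S.unit)), hrpos, ?_, ?_⟩
  · refine S.eff_of ?_ ?_
    · refine S.smul_nonneg' (by positivity) ?_
      have := S.add_le_add_right' (-(r • S.unit)) x (r • S.unit) hb1
      simpa using this
    · have hx2 : x + r • S.unit ≤ (2 * r) • S.unit := by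
        have := S.add_le_add_right' x (r • S.unit) (r • S.unit) hb2
        calc x + r • S.unit ≤ r • S.unit + r • S.unit := this
          _ = (2 * r) • S.unit := by rw [two_mul]; exact (add_smul r r S.unit).symm
      have := S.smul_le_smul' (2*r)⁻¹ _ _ (by positivity) hx2
      calc (2*r)⁻¹ • (x + r • S.unit) ≤ (2*r)⁻¹ • ((2*r) • S.unit) := this
        _ = S.unit := by rw [smul_smul, inv_mul_cancel₀ (by positivity), one_smul]
  · simp only
    rw [smul_smul, mul_inv_cancel₀ (by positivity : (2*r:ℝ) ≠ 0), one_smul]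
    abel

lemma span_eff_top (S : SPS X) : Submodule.span ℝ {a : X | S.Eff a} = ⊤ := by
  rw [Submodule.eq_top_iff']
  intro x
  obtain ⟨⟨r, y⟩, hr, hy, hxy⟩ := S.exists_rep x
  rw [hxy]
  exact Submodule.sub_mem _
    (Submodule.smul_mem _ _ (Submodule.subset_span hy))
    (Submodule.smul_mem _ _ (Submodule.subset_span S.eff_unit))

end SPS

end Aux2
section Aux3

namespace SPS

variable {X : Type*} [NormedAddCommGroup X] [NormedSpace ℝ X] [PartialOrder X]

lemma sub_nonpos_iff (S : SPS X) {a b : X} : a - b ≤ 0 ↔ a ≤ b := by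
  constructor
  · intro h
    have := S.add_le_add_right' (a - b) 0 b h
    simpa using this
  · intro h
    have := S.add_le_add_right' a b (-b) h
    simpa [sub_eq_add_neg] using this

lemma seq_nsmul_right (S : SPS X) {a : X} (ha : S.Eff a) (k : ℕ) :
    ∀ c : X, S.Eff c → S.Eff ((k:ℝ) • c) → S.seq a ((k:ℝ) • c) = (k:ℝ) • S.seq a c := by
  induction k with
  | zero => intro c hc _; simp [S.seq_zero_right ha]
  | succ k ih =>
    intro c hc hkc
    have hcast : ((k+1:ℕ):ℝ) • c = (k:ℝ) • c + c := by
      push_cast; rw [add_smul, one_smul]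
    have hkc' : S.Eff ((k:ℝ) • c) := by
      refine S.eff_of (S.smul_nonneg' (by positivity) (S.eff_nonneg hc)) ?_
      have h1 : (k:ℝ) • c ≤ ((k+1:ℕ):ℝ) • c := by
        refine S.smul_le_smul_scalar ?_ (S.eff_nonneg hc)
        push_cast; linarith
      exact le_trans h1 (S.eff_le_unit hkc)
    have hsum : S.Eff ((k:ℝ) • c + c) := by rw [← hcast]; exact hkc
    rw [hcast, S.s1 a _ c ha hkc' hc hsum, ih c hc hkc']
    push_cast
    rw [add_smul, one_smul]

lemma seq_ratsmul_right (S : SPS X) {a c : X} (ha : S.Eff a) (hc : S.Eff c)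
    {m n : ℕ} (hmn : m ≤ n) (hn : 1 ≤ n) :
    S.seq a (((m:ℝ)/(n:ℝ)) • c) = ((m:ℝ)/(n:ℝ)) • S.seq a c := by
  have hn0 : (0:ℝ) < n := by exact_mod_cast hn
  set d := ((n:ℝ)⁻¹) • c with hd
  have hdeff : S.Eff d := S.eff_smul (by positivity) (by
    rw [inv_le_one_iff₀]; right; exact_mod_cast hn) hc
  have hnd : (n:ℝ) • d = c := by
    rw [hd, smul_smul, mul_inv_cancel₀ (ne_of_gt hn0), one_smul]
  have hgd : S.seq a c = (n:ℝ) • S.seq a d := by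
    rw [← hnd]
    exact S.seq_nsmul_right ha n d hdeff (by rw [hnd]; exact hc)
  have hmd : ((m:ℝ)/(n:ℝ)) • c = (m:ℝ) • d := by
    rw [hd, smul_smul, div_eq_mul_inv]
  have hmdeff : S.Eff ((m:ℝ) • d) := by
    rw [← hmd]
    refine S.eff_smul (by positivity) ?_ hc
    rw [div_le_one hn0]; exact_mod_cast hmn
  rw [hmd, S.seq_nsmul_right ha m d hdeff hmdeff, hgd, smul_smul]
  congr 1
  field_simp

lemma seq_smul_right (S : SPS X) {a c : X} (ha : S.Eff a) (hc : S.Eff c)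
    {t : ℝ} (h0 : 0 ≤ t) (h1 : t ≤ 1) :
    S.seq a (t • c) = t • S.seq a c := by
  have heffac : S.Eff (S.seq a c) := S.seq_eff a c ha hc
  have hefftc : S.Eff (t • c) := S.eff_smul h0 h1 hc
  have key1 : S.seq a (t • c) - t • S.seq a c ≤ 0 := by
    apply S.arch
    intro n
    have hNpos : (0:ℝ) < (n:ℝ) + 1 := by positivity
    set N : ℝ := (n:ℝ) + 1 with hN
    set m : ℕ := ⌈t * N⌉₊ with hm
    have hq1 : t ≤ (m:ℝ)/N := by
      rw [le_div_iff₀ hNpos]; exact Nat.le_ceil _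
    have hq2 : (m:ℝ)/N ≤ t + N⁻¹ := by
      rw [div_le_iff₀ hNpos]
      have h := (Nat.ceil_lt_add_one (by positivity : (0:ℝ) ≤ t * N)).le
      calc (m:ℝ) ≤ t * N + 1 := h
        _ = (t + N⁻¹) * N := by field_simp
    have hmn : m ≤ n + 1 := by
      rw [hm, Nat.ceil_le]
      push_cast
      nlinarith
    have hrat : S.seq a (((m:ℝ)/((n+1:ℕ):ℝ)) • c) = ((m:ℝ)/((n+1:ℕ):ℝ)) • S.seq a c :=
      S.seq_ratsmul_right ha hc hmn (by omega)
    have hcastN : ((n+1:ℕ):ℝ) = N := by push_cast; rw [hN]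
    rw [hcastN] at hrat
    have hqle1 : (m:ℝ)/N ≤ 1 := by
      rw [div_le_one hNpos]
      calc (m:ℝ) ≤ ((n+1:ℕ):ℝ) := by exact_mod_cast hmn
        _ = N := hcastN
    have hmono : S.seq a (t • c) ≤ S.seq a (((m:ℝ)/N) • c) := by
      refine S.seq_mono_right ha hefftc (S.eff_smul (by positivity) hqle1 hc) ?_
      exact S.smul_le_smul_scalar hq1 (S.eff_nonneg hc)
    have hstep : S.seq a (t • c) ≤ t • S.seq a c + N⁻¹ • S.unit := by
      calc S.seq a (t • c) ≤ ((m:ℝ)/N) • S.seq a c := by rw [← hrat]; exact hmono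
        _ = t • S.seq a c + ((m:ℝ)/N - t) • S.seq a c := by
            rw [← add_smul]; ring_nf
        _ ≤ t • S.seq a c + N⁻¹ • S.unit := by
            refine S.add_le_add'' le_rfl ?_
            calc ((m:ℝ)/N - t) • S.seq a c ≤ ((m:ℝ)/N - t) • S.unit :=
                  S.smul_le_smul' _ _ _ (by linarith) (S.eff_le_unit heffac)
              _ ≤ N⁻¹ • S.unit := S.smul_le_smul_scalar (by linarith) S.unit_nonneg
    have h2 := S.add_le_add_right' _ _ (-(t • S.seq a c)) hstep
    calc S.seq a (t • c) - t • S.seq a c = S.seq a (t • c) + -(t • S.seq a c) := by abel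
      _ ≤ t • S.seq a c + N⁻¹ • S.unit + -(t • S.seq a c) := h2
      _ = N⁻¹ • S.unit := by abel
      _ = ((n:ℝ) + 1)⁻¹ • S.unit := by rw [hN]
  have key2 : t • S.seq a c - S.seq a (t • c) ≤ 0 := by
    apply S.arch
    intro n
    have hNpos : (0:ℝ) < (n:ℝ) + 1 := by positivity
    set N : ℝ := (n:ℝ) + 1 with hN
    set m : ℕ := ⌊t * N⌋₊ with hm
    have hq1 : (m:ℝ)/N ≤ t := by
      rw [div_le_iff₀ hNpos]; exact Nat.floor_le (by positivity)
    have hq2 : t ≤ (m:ℝ)/N + N⁻¹ := by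
      have h := (Nat.lt_floor_add_one (t * N)).le
      have h2 : t * N ≤ (m:ℝ) + 1 := by exact_mod_cast h
      calc t = t * N / N := by field_simp
        _ ≤ ((m:ℝ) + 1) / N := by gcongr
        _ = (m:ℝ)/N + N⁻¹ := by rw [add_div, one_div]
    have h3 : (m:ℝ) ≤ N := le_trans (Nat.floor_le (by positivity)) (by nlinarith)
    have hmn : m ≤ n + 1 := by
      have h4 : (m:ℝ) ≤ ((n+1:ℕ):ℝ) := by push_cast; rw [hN] at h3; linarith
      exact_mod_cast h4
    have hrat : S.seq a (((m:ℝ)/((n+1:ℕ):ℝ)) • c) = ((m:ℝ)/((n+1:ℕ):ℝ)) • S.seq a c :=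
      S.seq_ratsmul_right ha hc hmn (by omega)
    have hcastN : ((n+1:ℕ):ℝ) = N := by push_cast; rw [hN]
    rw [hcastN] at hrat
    have hqle1 : (m:ℝ)/N ≤ 1 := by
      rw [div_le_one hNpos]; exact h3
    have hq0 : (0:ℝ) ≤ (m:ℝ)/N := by positivity
    have hmono : S.seq a (((m:ℝ)/N) • c) ≤ S.seq a (t • c) := by
      refine S.seq_mono_right ha (S.eff_smul hq0 hqle1 hc) hefftc ?_
      exact S.smul_le_smul_scalar hq1 (S.eff_nonneg hc)
    have hstep : t • S.seq a c ≤ S.seq a (t • c) + N⁻¹ • S.unit := by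
      calc t • S.seq a c = ((m:ℝ)/N) • S.seq a c + (t - (m:ℝ)/N) • S.seq a c := by
            rw [← add_smul]; ring_nf
        _ ≤ S.seq a (t • c) + N⁻¹ • S.unit := by
            refine S.add_le_add'' ?_ ?_
            · rw [← hrat]; exact hmono
            · calc (t - (m:ℝ)/N) • S.seq a c ≤ (t - (m:ℝ)/N) • S.unit :=
                    S.smul_le_smul' _ _ _ (by linarith) (S.eff_le_unit heffac)
                _ ≤ N⁻¹ • S.unit := S.smul_le_smul_scalar (by linarith) S.unit_nonneg
    have h2 := S.add_le_add_right' _ _ (-(S.seq a (t • c))) hstep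
    calc t • S.seq a c - S.seq a (t • c) = t • S.seq a c + -(S.seq a (t • c)) := by abel
      _ ≤ S.seq a (t • c) + N⁻¹ • S.unit + -(S.seq a (t • c)) := h2
      _ = N⁻¹ • S.unit := by abel
      _ = ((n:ℝ) + 1)⁻¹ • S.unit := by rw [hN]
  exact le_antisymm (S.sub_nonpos_iff.1 key1) (S.sub_nonpos_iff.1 key2)

end SPS

end Aux3
section Aux4

namespace SPS

variable {X : Type*} [NormedAddCommGroup X] [NormedSpace ℝ X] [PartialOrder X]

lemma eff_combo (S : SPS X) {α β : ℝ} {y z : X} (hy : S.Eff y) (hz : S.Eff z)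
    (hα : 0 ≤ α) (hβ : 0 ≤ β) (hs : α + β ≤ 1) : S.Eff (α • y + β • z) := by
  refine S.eff_add (S.smul_nonneg' hα (S.eff_nonneg hy))
    (S.smul_nonneg' hβ (S.eff_nonneg hz)) ?_
  calc α • y + β • z ≤ α • S.unit + β • S.unit :=
        S.add_le_add'' (S.smul_le_smul' _ _ _ hα (S.eff_le_unit hy))
          (S.smul_le_smul' _ _ _ hβ (S.eff_le_unit hz))
    _ = (α + β) • S.unit := (add_smul α β S.unit).symm
    _ ≤ (1:ℝ) • S.unit := S.smul_le_smul_scalar hs S.unit_nonneg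
    _ = S.unit := one_smul _ _

lemma seq_combo (S : SPS X) {a : X} (ha : S.Eff a) {α β : ℝ} {y z : X}
    (hy : S.Eff y) (hz : S.Eff z) (hα : 0 ≤ α) (hβ : 0 ≤ β) (hs : α + β ≤ 1) :
    S.seq a (α • y + β • z) = α • S.seq a y + β • S.seq a z := by
  have h1 : S.Eff (α • y) := S.eff_smul hα (by linarith) hy
  have h2 : S.Eff (β • z) := S.eff_smul hβ (by linarith) hz
  rw [S.s1 a _ _ ha h1 h2 (S.eff_combo hy hz hα hβ hs),
    S.seq_smul_right ha hy hα (by linarith), S.seq_smul_right ha hz hβ (by linarith)]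

lemma rep_value_eq (S : SPS X) {a : X} (ha : S.Eff a) {x : X} {r r' : ℝ} {y y' : X}
    (hr : 0 < r) (hy : S.Eff y) (hxy : x = (2*r) • y - r • S.unit)
    (hr' : 0 < r') (hy' : S.Eff y') (hxy' : x = (2*r') • y' - r' • S.unit) :
    (2*r) • S.seq a y - r • S.seq a S.unit
      = (2*r') • S.seq a y' - r' • S.seq a S.unit := by
  set u := S.unit with hu
  have hsum : (2*r) • y + r' • u = (2*r') • y' + r • u := by
    rw [sub_eq_sub_iff_add_eq_add.symm]
    rw [← hxy, ← hxy']
  set c : ℝ := 2*(r + r') with hc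
  have hcpos : (0:ℝ) < c := by rw [hc]; positivity
  set α := c⁻¹ * (2*r) with hα
  set β := c⁻¹ * r' with hβ
  set α' := c⁻¹ * (2*r') with hα'
  set β' := c⁻¹ * r with hβ'
  have hαc : c * α = 2*r := by rw [hα, mul_inv_cancel_left₀ (ne_of_gt hcpos)]
  have hβc : c * β = r' := by rw [hβ, mul_inv_cancel_left₀ (ne_of_gt hcpos)]
  have hα'c : c * α' = 2*r' := by rw [hα', mul_inv_cancel_left₀ (ne_of_gt hcpos)]
  have hβ'c : c * β' = r := by rw [hβ', mul_inv_cancel_left₀ (ne_of_gt hcpos)]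
  have hα0 : 0 ≤ α := by rw [hα]; positivity
  have hβ0 : 0 ≤ β := by rw [hβ]; positivity
  have hα'0 : 0 ≤ α' := by rw [hα']; positivity
  have hβ'0 : 0 ≤ β' := by rw [hβ']; positivity
  have hαβ : α + β ≤ 1 := by
    have : c * (α + β) = 2*r + r' := by rw [mul_add, hαc, hβc]
    nlinarith
  have hα'β' : α' + β' ≤ 1 := by
    have : c * (α' + β') = 2*r' + r := by rw [mul_add, hα'c, hβ'c]
    nlinarith
  have heq : α • y + β • u = α' • y' + β' • u := by
    have h2 := congrArg (fun v => c⁻¹ • v) hsum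
    simp only [smul_add, smul_smul] at h2
    exact h2
  have hgeq : α • S.seq a y + β • S.seq a u = α' • S.seq a y' + β' • S.seq a u := by
    rw [← S.seq_combo ha hy S.eff_unit hα0 hβ0 hαβ,
      ← S.seq_combo ha hy' S.eff_unit hα'0 hβ'0 hα'β', heq]
  have h3 := congrArg (fun v => c • v) hgeq
  simp only [smul_add, smul_smul, hαc, hβc, hα'c, hβ'c] at h3
  rw [sub_eq_sub_iff_add_eq_add]
  exact h3

noncomputable def extSeq (S : SPS X) (a : X) (x : X) : X :=
  (2 * (S.exists_rep x).choose.1) • S.seq a (S.exists_rep x).choose.2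
    - (S.exists_rep x).choose.1 • S.seq a S.unit

lemma extSeq_eq (S : SPS X) {a : X} (ha : S.Eff a) {x : X} {r : ℝ} {y : X}
    (hr : 0 < r) (hy : S.Eff y) (hxy : x = (2*r) • y - r • S.unit) :
    S.extSeq a x = (2*r) • S.seq a y - r • S.seq a S.unit := by
  obtain ⟨hr0, hy0, hxy0⟩ := (S.exists_rep x).choose_spec
  exact S.rep_value_eq ha hr0 hy0 hxy0 hr hy hxy

lemma extSeq_eff (S : SPS X) {a : X} (ha : S.Eff a) {c : X} (hc : S.Eff c) :
    S.extSeq a c = S.seq a c := by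
  set y := (2:ℝ)⁻¹ • c + (2:ℝ)⁻¹ • S.unit with hy
  have hyeff : S.Eff y := S.eff_combo hc S.eff_unit (by norm_num) (by norm_num) (by norm_num)
  have hrep : c = ((2:ℝ)*1) • y - (1:ℝ) • S.unit := by
    rw [hy]; match_scalars <;> norm_num
  rw [S.extSeq_eq ha one_pos hyeff hrep, hy,
    S.seq_combo ha hc S.eff_unit (by norm_num) (by norm_num) (by norm_num)]
  match_scalars <;> norm_num

lemma extSeq_add (S : SPS X) {a : X} (ha : S.Eff a) (x x' : X) :
    S.extSeq a (x + x') = S.extSeq a x + S.extSeq a x' := by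
  obtain ⟨⟨r, y⟩, hr, hy, hxy⟩ := S.exists_rep x
  obtain ⟨⟨r', y'⟩, hr', hy', hxy'⟩ := S.exists_rep x'
  set rr := r + r' with hrr
  have hrrpos : 0 < rr := by rw [hrr]; positivity
  set α := rr⁻¹ * r with hα
  set β := rr⁻¹ * r' with hβ
  have hα0 : 0 ≤ α := by rw [hα]; positivity
  have hβ0 : 0 ≤ β := by rw [hβ]; positivity
  have hαβ : α + β = 1 := by
    rw [hα, hβ, ← mul_add, inv_mul_cancel₀ (ne_of_gt hrrpos)]
  set z := α • y + β • y' with hz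
  have hzeff : S.Eff z := S.eff_combo hy hy' hα0 hβ0 (le_of_eq hαβ)
  have hs1 : (2*rr) • (α • y) = (2*r) • y := by
    rw [smul_smul]; congr 1; rw [hα]; field_simp
  have hs2 : (2*rr) • (β • y') = (2*r') • y' := by
    rw [smul_smul]; congr 1; rw [hβ]; field_simp
  have hrep : x + x' = (2*rr) • z - rr • S.unit := by
    rw [hz, smul_add, hs1, hs2, hxy, hxy', hrr, add_smul]
    abel
  rw [S.extSeq_eq ha hrrpos hzeff hrep, hz,
    S.seq_combo ha hy hy' hα0 hβ0 (le_of_eq hαβ),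
    S.extSeq_eq ha hr hy hxy, S.extSeq_eq ha hr' hy' hxy']
  have ht1 : (2*rr) • (α • S.seq a y) = (2*r) • S.seq a y := by
    rw [smul_smul]; congr 1; rw [hα]; field_simp
  have ht2 : (2*rr) • (β • S.seq a y') = (2*r') • S.seq a y' := by
    rw [smul_smul]; congr 1; rw [hβ]; field_simp
  rw [smul_add, ht1, ht2, hrr, add_smul]
  abel

lemma extSeq_smul (S : SPS X) {a : X} (ha : S.Eff a) (t : ℝ) (x : X) :
    S.extSeq a (t • x) = t • S.extSeq a x := by
  have hpos : ∀ s : ℝ, 0 < s → ∀ w : X, S.extSeq a (s • w) = s • S.extSeq a w := by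
    intro s hs w
    obtain ⟨⟨r, y⟩, hr, hy, hxy⟩ := S.exists_rep w
    have hrep : s • w = (2*(s*r)) • y - (s*r) • S.unit := by
      rw [hxy, smul_sub, smul_smul, smul_smul]; ring_nf
    rw [S.extSeq_eq ha (by positivity) hy hrep, S.extSeq_eq ha hr hy hxy,
      smul_sub, smul_smul, smul_smul]
    ring_nf
  have hzero : S.extSeq a 0 = 0 := by
    have := S.extSeq_eff ha S.eff_zero
    rw [this, S.seq_zero_right ha]
  rcases lt_trichotomy t 0 with hlt | heq | hgt
  · have hsum : t • x + (-t) • x = 0 := by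
      rw [← add_smul]; simp
    have h2 : S.extSeq a (t • x) + S.extSeq a ((-t) • x) = 0 := by
      rw [← S.extSeq_add ha, hsum, hzero]
    have h3 : S.extSeq a ((-t) • x) = (-t) • S.extSeq a x := hpos (-t) (by linarith) x
    rw [h3] at h2
    have : S.extSeq a (t • x) = -((-t) • S.extSeq a x) := by
      rw [eq_neg_iff_add_eq_zero]; exact h2
    rw [this, neg_smul, neg_neg]
  · rw [heq, zero_smul, zero_smul, hzero]
  · exact hpos t hgt x

end SPS

end Aux4
section Aux5

namespace SPS

variable {X : Type*} [NormedAddCommGroup X] [NormedSpace ℝ X] [PartialOrder X]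

lemma norm_pos_of_atomic (S : SPS X) {p : X} (hp : S.Atomic p) : 0 < ‖p‖ :=
  norm_pos_iff.2 hp.2.1

lemma normalized_eff (S : SPS X) {p : X} (hp : S.Atomic p) :
    S.Eff (‖p‖⁻¹ • p) := by
  have hnp : 0 < ‖p‖ := S.norm_pos_of_atomic hp
  refine S.eff_of (S.smul_nonneg' (by positivity) (S.eff_nonneg hp.1)) ?_
  calc ‖p‖⁻¹ • p ≤ ‖p‖⁻¹ • (‖p‖ • S.unit) :=
        S.smul_le_smul' _ _ _ (by positivity) (S.le_norm_smul_unit p)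
    _ = S.unit := by rw [smul_smul, inv_mul_cancel₀ (ne_of_gt hnp), one_smul]

lemma normalized_below (S : SPS X) {p : X} (hp : S.Atomic p) {b : X}
    (hb : S.Eff b) (hle : b ≤ ‖p‖⁻¹ • p) :
    ∃ t : ℝ, 0 ≤ t ∧ t ≤ 1 ∧ b = t • (‖p‖⁻¹ • p) := by
  have hnp : 0 < ‖p‖ := S.norm_pos_of_atomic hp
  have h1 : S.Eff (‖p‖ • b) := S.eff_smul (by positivity) (S.norm_le_one hp.1) hb
  have h2 : ‖p‖ • b ≤ p := by
    have := S.smul_le_smul' ‖p‖ _ _ (by positivity) hle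
    rwa [smul_inv_smul₀ (ne_of_gt hnp)] at this
  obtain ⟨t, ht0, ht1, htb⟩ := hp.2.2 _ h1 h2
  refine ⟨t, ht0, ht1, ?_⟩
  have : ‖p‖⁻¹ • (‖p‖ • b) = ‖p‖⁻¹ • (t • p) := by rw [htb]
  rw [inv_smul_smul₀ (ne_of_gt hnp)] at this
  rw [this, smul_smul, smul_smul, mul_comm]

lemma normalized_sharp (S : SPS X) {p : X} (hp : S.Atomic p) :
    S.seq (‖p‖⁻¹ • p) (‖p‖⁻¹ • p) = ‖p‖⁻¹ • p := by
  set p₁ := ‖p‖⁻¹ • p with hp₁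
  have hnp : 0 < ‖p‖ := S.norm_pos_of_atomic hp
  have he : S.Eff p₁ := S.normalized_eff hp
  have hnorm1 : ‖p₁‖ = 1 := by
    rw [hp₁, norm_smul, norm_inv, norm_norm, inv_mul_cancel₀ (ne_of_gt hnp)]
  have hle : S.seq p₁ p₁ ≤ p₁ := S.seq_le_left he he
  obtain ⟨t, ht0, ht1, hts⟩ := S.normalized_below hp (S.seq_eff _ _ he he) hle
  -- show t = 1
  have hsplit : S.seq p₁ S.unit = S.seq p₁ p₁ + S.seq p₁ (S.unit - p₁) := by
    have := S.s1 p₁ p₁ (S.unit - p₁) he he (S.eff_sub_unit he)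
      (by rw [add_sub_cancel]; exact S.eff_unit)
    rwa [add_sub_cancel] at this
  have hcompl : S.seq p₁ (S.unit - p₁) = (1 - t) • p₁ := by
    have h1 : S.seq p₁ (S.unit - p₁) = S.seq p₁ S.unit - S.seq p₁ p₁ := by
      rw [hsplit]; abel
    rw [h1, S.seq_unit_right he, hts, sub_smul, one_smul]
  have hflip : S.seq p₁ (S.unit - p₁) = S.seq (S.unit - p₁) p₁ :=
    S.s6a p₁ p₁ he he rfl
  have hub : S.seq (S.unit - p₁) p₁ ≤ S.unit - p₁ :=
    S.seq_le_left (S.eff_sub_unit he) he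
  have hkey : (1 - t) • p₁ ≤ S.unit - p₁ := by
    rw [← hcompl, hflip]; exact hub
  have hkey2 : (2 - t) • p₁ ≤ S.unit := by
    have := S.add_le_add_right' _ _ p₁ hkey
    have h2 : (1 - t) • p₁ + p₁ = (2 - t) • p₁ := by
      match_scalars; ring
    rw [h2] at this
    calc (2 - t) • p₁ ≤ S.unit - p₁ + p₁ := this
      _ = S.unit := by abel
  have h2t : (0:ℝ) < 2 - t := by linarith
  have hle2 : p₁ ≤ (2 - t)⁻¹ • S.unit := by
    have := S.smul_le_smul' (2-t)⁻¹ _ _ (by positivity) hkey2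
    rwa [smul_smul, inv_mul_cancel₀ (ne_of_gt h2t), one_smul] at this
  have hnormle : ‖p₁‖ ≤ (2 - t)⁻¹ := by
    refine S.norm_le_of (by positivity) ?_ hle2
    calc -((2-t)⁻¹ • S.unit) ≤ 0 := by
          have h3 : (0:X) ≤ (2-t)⁻¹ • S.unit := S.smul_nonneg' (by positivity) S.unit_nonneg
          have := S.add_le_add_right' 0 _ (-((2-t)⁻¹ • S.unit)) h3
          simpa using this
      _ ≤ p₁ := S.eff_nonneg he
  rw [hnorm1] at hnormle
  have ht : t = 1 := by
    have h4 : 2 - t ≤ 1 := by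
      have h5 : (2-t) * 1 ≤ (2-t) * (2-t)⁻¹ := by
        apply mul_le_mul_of_nonneg_left hnormle (le_of_lt h2t)
      rw [mul_one, mul_inv_cancel₀ (ne_of_gt h2t)] at h5
      linarith
    linarith
  rw [hts, ht, one_smul]

end SPS

end Aux5

/-- for sequential product spaces `V`, `W` (Euclidean Jordan algebras,
i.e. finite-dimensional) with a sequential product space structure on `V ⊗ W` whose
unit and product are compatible with those of `V` and `W` on pure tensors, the tensor
product `p ⊗ q` of atomic effects is atomic. -/
theorem atomic_tensor {V W T : Type*}
    [NormedAddCommGroup V] [NormedSpace ℝ V] [PartialOrder V] [FiniteDimensional ℝ V]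
    [NormedAddCommGroup W] [NormedSpace ℝ W] [PartialOrder W] [FiniteDimensional ℝ W]
    [NormedAddCommGroup T] [NormedSpace ℝ T] [PartialOrder T]
    (SV : SPS V) (SW : SPS W) (ST : SPS T)
    (e : TensorProduct ℝ V W ≃ₗ[ℝ] T)
    (hunit : ST.unit = e (SV.unit ⊗ₜ[ℝ] SW.unit))
    (heff : ∀ a b : _, SV.Eff a → SW.Eff b → ST.Eff (e (a ⊗ₜ[ℝ] b)))
    (hseq : ∀ a₁ a₂ b₁ b₂ : _, SV.Eff a₁ → SV.Eff a₂ → SW.Eff b₁ → SW.Eff b₂ →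
      ST.seq (e (a₁ ⊗ₜ[ℝ] b₁)) (e (a₂ ⊗ₜ[ℝ] b₂)) =
        e ((SV.seq a₁ a₂) ⊗ₜ[ℝ] (SW.seq b₁ b₂)))
    (p : V) (q : W) (hp : SV.Atomic p) (hq : SW.Atomic q) :
    ST.Atomic (e (p ⊗ₜ[ℝ] q)) := by
  classical
  set p₁ : V := ‖p‖⁻¹ • p with hp₁def
  set q₁ : W := ‖q‖⁻¹ • q with hq₁def
  have hnp : 0 < ‖p‖ := SV.norm_pos_of_atomic hp
  have hnq : 0 < ‖q‖ := SW.norm_pos_of_atomic hq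
  have heffp₁ : SV.Eff p₁ := SV.normalized_eff hp
  have heffq₁ : SW.Eff q₁ := SW.normalized_eff hq
  set P : T := e (p ⊗ₜ[ℝ] q) with hPdef
  set P₁ : T := e (p₁ ⊗ₜ[ℝ] q₁) with hP₁def
  set s : ℝ := ‖p‖ * ‖q‖ with hsdef
  have hspos : 0 < s := by positivity
  have hsle1 : s ≤ 1 := by
    rw [hsdef]
    exact mul_le_one₀ (SV.norm_le_one hp.1) (norm_nonneg q) (SW.norm_le_one hq.1)
  have hsmp : ‖p‖ • p₁ = p := by rw [hp₁def, smul_inv_smul₀ (ne_of_gt hnp)]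
  have hsmq : ‖q‖ • q₁ = q := by rw [hq₁def, smul_inv_smul₀ (ne_of_gt hnq)]
  have hPP₁ : P = s • P₁ := by
    rw [hPdef, hP₁def, ← map_smul]
    congr 1
    rw [hsdef, ← smul_smul, ← TensorProduct.tmul_smul, hsmq, TensorProduct.smul_tmul', hsmp]
  have hPeff : ST.Eff P := heff p q hp.1 hq.1
  have hP₁eff : ST.Eff P₁ := heff p₁ q₁ heffp₁ heffq₁
  -- p ⊗ q ≠ 0
  have hPne : P ≠ 0 := by
    intro h0
    have htz : p ⊗ₜ[ℝ] q = 0 := by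
      have := (LinearEquiv.map_eq_zero_iff e).1 (hPdef ▸ h0)
      exact this
    obtain ⟨f, hf⟩ : ∃ f : Module.Dual ℝ V, f p ≠ 0 := by
      by_contra hall
      push_neg at hall
      exact hp.2.1 ((Module.forall_dual_apply_eq_zero_iff ℝ p).1 hall)
    obtain ⟨g, hg⟩ : ∃ g : Module.Dual ℝ W, g q ≠ 0 := by
      by_contra hall
      push_neg at hall
      exact hq.2.1 ((Module.forall_dual_apply_eq_zero_iff ℝ q).1 hall)
    set φ : TensorProduct ℝ V W →ₗ[ℝ] ℝ :=
      (TensorProduct.lid ℝ ℝ).toLinearMap ∘ₗ TensorProduct.map f g with hφdef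
    have hφ := congrArg φ htz
    rw [map_zero] at hφ
    rw [hφdef] at hφ
    simp only [LinearMap.coe_comp, Function.comp_apply, LinearEquiv.coe_coe,
      TensorProduct.map_tmul, TensorProduct.lid_tmul, smul_eq_mul] at hφ
    exact mul_ne_zero hf hg hφ
  have hP₁ne : P₁ ≠ 0 := by
    intro h0
    apply hPne
    rw [hPP₁, h0, smul_zero]
  -- sharpness of P₁
  have hsharp : ST.seq P₁ P₁ = P₁ := by
    rw [hP₁def, hseq p₁ p₁ q₁ q₁ heffp₁ heffp₁ heffq₁ heffq₁]
    rw [hp₁def, hq₁def, SV.normalized_sharp hp, SW.normalized_sharp hq]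
  -- the extension of seq P₁ · and its range
  set F : T → T := ST.extSeq P₁ with hFdef
  have hFeff : ∀ c : T, ST.Eff c → F c = ST.seq P₁ c := fun c hc => ST.extSeq_eff hP₁eff hc
  set M : Submodule ℝ T := Submodule.span ℝ {P₁} with hMdef
  set gens : Set T := {x | ∃ a b, SV.Eff a ∧ SW.Eff b ∧ x = e (a ⊗ₜ[ℝ] b)} with hgensdef
  -- generators span T
  have hstep1 : ∀ a : V, SV.Eff a → ∀ w : W, e (a ⊗ₜ[ℝ] w) ∈ Submodule.span ℝ gens := by
    intro a ha w
    set L : W →ₗ[ℝ] T := e.toLinearMap ∘ₗ TensorProduct.mk ℝ V W a with hL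
    have hsub : Submodule.span ℝ {b : W | SW.Eff b} ≤
        Submodule.comap L (Submodule.span ℝ gens) := by
      rw [Submodule.span_le]
      intro b hb
      exact Submodule.subset_span ⟨a, b, ha, hb, rfl⟩
    rw [SW.span_eff_top] at hsub
    have : w ∈ Submodule.comap L (Submodule.span ℝ gens) := hsub trivial
    simpa [hL] using this
  have hstep2 : ∀ (v : V) (w : W), e (v ⊗ₜ[ℝ] w) ∈ Submodule.span ℝ gens := by
    intro v w
    set L : V →ₗ[ℝ] T := e.toLinearMap ∘ₗ (TensorProduct.mk ℝ V W).flip w with hL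
    have hsub : Submodule.span ℝ {a : V | SV.Eff a} ≤
        Submodule.comap L (Submodule.span ℝ gens) := by
      rw [Submodule.span_le]
      intro a ha
      have : L a = e (a ⊗ₜ[ℝ] w) := by simp [hL]
      simpa [Submodule.mem_comap, this] using hstep1 a ha w
    rw [SV.span_eff_top] at hsub
    have : v ∈ Submodule.comap L (Submodule.span ℝ gens) := hsub trivial
    simpa [hL] using this
  have hgenspan : Submodule.span ℝ gens = ⊤ := by
    rw [Submodule.eq_top_iff']
    intro x
    have hx : e.symm x ∈ Submodule.span ℝ { t : TensorProduct ℝ V W | ∃ m n, m ⊗ₜ n = t } := by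
      rw [TensorProduct.span_tmul_eq_top]; trivial
    have hmem : e (e.symm x) ∈ Submodule.span ℝ gens := by
      refine Submodule.span_induction ?_ ?_ ?_ ?_ hx
      · rintro y ⟨m, n, rfl⟩
        exact hstep2 m n
      · simp
      · intro y z _ _ hy hz
        rw [map_add]
        exact Submodule.add_mem _ hy hz
      · intro r y _ hy
        rw [map_smul]
        exact Submodule.smul_mem _ _ hy
    rwa [LinearEquiv.apply_symm_apply] at hmem
  -- F maps everything into span {P₁}
  have hFmem : ∀ x : T, F x ∈ M := by
    have hspan : ∀ x ∈ Submodule.span ℝ gens, F x ∈ M := by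
      intro x hx
      refine Submodule.span_induction ?_ ?_ ?_ ?_ hx
      · rintro y ⟨a, b, ha, hb, rfl⟩
        rw [hFeff _ (heff a b ha hb), hP₁def, hseq p₁ a q₁ b heffp₁ ha heffq₁ hb]
        have hva : SV.seq p₁ a ≤ p₁ := SV.seq_le_left heffp₁ ha
        have hwa : SW.seq q₁ b ≤ q₁ := SW.seq_le_left heffq₁ hb
        obtain ⟨ta, _, _, hta⟩ := SV.normalized_below hp (SV.seq_eff _ _ heffp₁ ha) (hp₁def ▸ hva)
        obtain ⟨tb, _, _, htb⟩ := SW.normalized_below hq (SW.seq_eff _ _ heffq₁ hb) (hq₁def ▸ hwa)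
        rw [hta, htb, ← hp₁def, ← hq₁def, ← TensorProduct.smul_tmul',
          TensorProduct.tmul_smul, smul_smul, map_smul]
        exact Submodule.smul_mem _ _ (Submodule.subset_span rfl)
      · have : F 0 = 0 := by
          rw [hFeff 0 ST.eff_zero, ST.seq_zero_right hP₁eff]
        rw [this]; exact Submodule.zero_mem _
      · intro y z _ _ hy hz
        rw [hFdef, ST.extSeq_add hP₁eff]
        exact Submodule.add_mem _ hy hz
      · intro r y _ hy
        rw [hFdef, ST.extSeq_smul hP₁eff]
        exact Submodule.smul_mem _ _ hy
    intro x
    exact hspan x (hgenspan ▸ Submodule.mem_top)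
  -- main atomicity argument
  refine ⟨hPeff, hPne, ?_⟩
  intro c hc hcle
  have hcleP₁ : c ≤ P₁ := by
    calc c ≤ P := hcle
      _ = s • P₁ := hPP₁
      _ ≤ (1:ℝ) • P₁ := ST.smul_le_smul_scalar hsle1 (ST.eff_nonneg hP₁eff)
      _ = P₁ := one_smul _ _
  have heffcompl : ST.Eff (ST.unit - P₁) := ST.eff_sub_unit hP₁eff
  have h1 : ST.seq P₁ (ST.unit - P₁) = 0 := by
    have hs1 := ST.s1 P₁ P₁ (ST.unit - P₁) hP₁eff hP₁eff heffcompl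
      (by rw [add_sub_cancel]; exact ST.eff_unit)
    rw [add_sub_cancel, ST.seq_unit_right hP₁eff, hsharp] at hs1
    have : P₁ - P₁ = P₁ - (P₁ + ST.seq P₁ (ST.unit - P₁)) := by rw [← hs1]
    simpa using this.symm
  have h2 : ST.seq (ST.unit - P₁) P₁ = 0 := ST.s4 P₁ _ hP₁eff heffcompl h1
  have h3 : ST.seq (ST.unit - P₁) c = 0 := by
    have hle0 : ST.seq (ST.unit - P₁) c ≤ 0 := by
      have := ST.seq_mono_right heffcompl hc hP₁eff hcleP₁
      rwa [h2] at this
    exact le_antisymm hle0 (ST.eff_nonneg (ST.seq_eff _ _ heffcompl hc))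
  have h4 : ST.seq c (ST.unit - P₁) = 0 := ST.s4 _ c heffcompl hc h3
  have h5 : c = ST.seq c P₁ := by
    have hs1 := ST.s1 c P₁ (ST.unit - P₁) hc hP₁eff heffcompl
      (by rw [add_sub_cancel]; exact ST.eff_unit)
    rw [add_sub_cancel, ST.seq_unit_right hc, h4, add_zero] at hs1
    exact hs1
  have h6 : ST.seq c P₁ = ST.seq P₁ c := by
    have hcompat : ST.seq c (ST.unit - P₁) = ST.seq (ST.unit - P₁) c := by rw [h3, h4]
    have := ST.s6a c (ST.unit - P₁) hc heffcompl hcompat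
    rwa [sub_sub_cancel] at this
  have h7 : c = F c := by rw [hFeff c hc, ← h6, ← h5]
  obtain ⟨t, ht⟩ := Submodule.mem_span_singleton.1 (hFmem c)
  have hct : c = t • P₁ := by rw [h7, ← ht]
  by_cases hc0 : c = 0
  · exact ⟨0, le_rfl, zero_le_one, by rw [hc0, zero_smul]⟩
  have htpos : 0 < t := by
    rcases le_or_gt t 0 with hle0 | hlt
    · exfalso
      apply hc0
      have hnn : (0:T) ≤ (-t) • P₁ := ST.smul_nonneg' (by linarith) (ST.eff_nonneg hP₁eff)
      have hle : c ≤ 0 := by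
        rw [hct]
        have := ST.add_le_add_right' 0 ((-t) • P₁) (t • P₁) hnn
        simpa [neg_smul] using this
      exact le_antisymm hle (ST.eff_nonneg hc)
    · exact hlt
  have hts : t ≤ s := by
    by_contra hgt
    push_neg at hgt
    have hA : (0:T) ≤ (s - t) • P₁ := by
      have h8 := ST.sub_nonneg_iff.2 hcle
      rw [hPP₁, hct, ← sub_smul] at h8
      exact h8
    have hB : (s - t) • P₁ ≤ 0 := by
      have hnn : (0:T) ≤ (t - s) • P₁ := ST.smul_nonneg' (by linarith) (ST.eff_nonneg hP₁eff)
      have := ST.add_le_add_right' 0 ((t - s) • P₁) ((s - t) • P₁) hnn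
      have h9 : (t - s) • P₁ + (s - t) • P₁ = 0 := by
        rw [← add_smul]; simp
      rw [zero_add, h9] at this
      exact this
    have hzero : (s - t) • P₁ = 0 := le_antisymm hB hA
    have : P₁ = 0 := by
      rcases smul_eq_zero.1 hzero with h | h
      · exfalso; apply hgt.ne; linarith [sub_eq_zero.1 h]
      · exact h
    exact hP₁ne this
  refine ⟨t / s, by positivity, (div_le_one hspos).2 hts, ?_⟩
  rw [hPP₁, smul_smul, div_mul_cancel₀ _ (ne_of_gt hspos), hct]
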